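/- Let A and B be the 2×2 nilpotent Jordan blocks with a 1 in the (1,2) entry. Then the spectral norm of the Kronecker product B ⊗ A equals 1, while the supremum of |xy| over (x,y) ∈ W(A) × W(B) equals 1/4. Hence any constant K satisfying ‖f{A,B}‖₂ ≤ K·sup_{W(A)×W(B)}|f| for all bivariate polynomials f must satisfy K ≥ 4. -/

import Mathlib

open scoped Matrix Kronecker

/-- Spectral norm of a complex matrix. -/
noncomputable def specNorm {m n : Type*} [Fintype m] [Fintype n] [DecidableEq n]
    (M : Matrix m n ℂ) : ℝ :=
  ‖LinearMap.toContinuousLinearMap (Matrix.toEuclideanLin M)‖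

/-- The numerical range `W(A)` of a complex matrix. -/
def numRange {n : Type*} [Fintype n] (A : Matrix n n ℂ) : Set ℂ :=
  {z | ∃ v : n → ℂ, star v ⬝ᵥ v = 1 ∧ z = star v ⬝ᵥ A.mulVec v}

/-- Evaluation of a bivariate polynomial `p` at the commuting matrices
`I ⊗ A` and `B ⊗ I`, giving the bivariate matrix function `p{A,B}`. -/
noncomputable def bivPolyEval {m n : Type*} [Fintype m] [DecidableEq m] [Fintype n]
    [DecidableEq n] (p : MvPolynomial (Fin 2) ℂ) (A : Matrix m m ℂ) (B : Matrix n n ℂ) :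
    Matrix (n × m) (n × m) ℂ :=
  ∑ e ∈ p.support, p.coeff e • ((B ^ e 1) ⊗ₖ (A ^ e 0))

/-! The Jordan block is the matrix unit `E₀₁`, so `B ⊗ A = E₍₀,₀₎₍₁,₁₎` is the rank-one operator
`x ↦ ⟪e₍₁,₁₎, x⟫ e₍₀,₀₎` between unit vectors and has norm `1`. For a unit vector `v`,
`v* E₀₁ v = conj v₀ · v₁` has modulus at most `(|v₀|² + |v₁|²) / 2 ≤ 1 / 2`, attained at
`v = (1, 1) / √2`; so the largest `|xy|` over `W(A) × W(B)` is `1 / 4`. Testing the assumed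
inequality on `f = xy` then gives `1 ≤ K / 4`. -/

open Matrix InnerProductSpace

section SpectralNorm

variable {ι κ : Type*} [Fintype ι] [Fintype κ] [DecidableEq κ]

lemma specNorm_vecMulVec (x : EuclideanSpace ℂ ι) (y : EuclideanSpace ℂ κ) :
    specNorm (vecMulVec x (star y)) = ‖x‖ * ‖y‖ := by
  have h : toEuclideanLin (vecMulVec x (star y)) = (rankOne ℂ x y : _ →ₗ[ℂ] _) := by
    rw [← symm_toEuclideanLin_rankOne, LinearEquiv.apply_symm_apply]
  rw [specNorm, h]
  exact norm_rankOne x y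

lemma specNorm_single_one [DecidableEq ι] (i : ι) (j : κ) :
    specNorm (single i j (1 : ℂ)) = 1 := by
  have h : single i j (1 : ℂ) =
      vecMulVec (EuclideanSpace.single i 1) (star (EuclideanSpace.single j 1)) := by
    ext a b
    simp only [vecMulVec_apply, single_apply, PiLp.single_apply, Pi.star_apply, @eq_comm _ a,
      @eq_comm _ b]
    split_ifs <;> simp_all
  rw [h, specNorm_vecMulVec]
  simp

end SpectralNorm

section NumericalRange

variable {ι : Type*} [Fintype ι]

lemma star_dotProduct_self_eq_sum_norm_sq (v : ι → ℂ) :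
    star v ⬝ᵥ v = ((∑ k, ‖v k‖ ^ 2 : ℝ) : ℂ) := by
  simp [dotProduct, Complex.conj_mul']

variable [DecidableEq ι]

lemma star_dotProduct_single_one_mulVec (i j : ι) (v : ι → ℂ) :
    star v ⬝ᵥ single i j (1 : ℂ) *ᵥ v = star (v i) * v j := by
  simp [single_mulVec_eq, mul_comm]

lemma norm_le_half_of_mem_numRange_single_one {i j : ι} (hij : i ≠ j) {z : ℂ}
    (hz : z ∈ numRange (single i j (1 : ℂ))) : ‖z‖ ≤ 1 / 2 := by
  obtain ⟨v, hv, rfl⟩ := hz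
  have hsum : ∑ k, ‖v k‖ ^ 2 = 1 :=
    mod_cast (star_dotProduct_self_eq_sum_norm_sq v).symm.trans hv
  have hpair : ‖v i‖ ^ 2 + ‖v j‖ ^ 2 ≤ 1 := by
    rw [← hsum, ← Finset.sum_pair (f := fun k => ‖v k‖ ^ 2) hij]
    exact Finset.sum_le_sum_of_subset_of_nonneg (Finset.subset_univ _) fun _ _ _ => by positivity
  rw [star_dotProduct_single_one_mulVec, norm_mul, norm_star]
  nlinarith [sq_nonneg (‖v i‖ - ‖v j‖)]

lemma half_mem_numRange_single_one {i j : ι} (hij : i ≠ j) :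
    (1 / 2 : ℂ) ∈ numRange (single i j (1 : ℂ)) := by
  set c : ℂ := (((Real.sqrt 2)⁻¹ : ℝ) : ℂ)
  have hc : ‖c‖ ^ 2 = 1 / 2 := by simp [c, inv_pow]
  refine ⟨Pi.single i c + Pi.single j c, ?_, ?_⟩
  · rw [star_dotProduct_self_eq_sum_norm_sq, Fintype.sum_eq_add i j hij]
    · simp only [Pi.add_apply, Pi.single_eq_same, Pi.single_eq_of_ne hij,
        Pi.single_eq_of_ne' hij, add_zero, zero_add, hc]
      norm_num
    · rintro k ⟨hki, hkj⟩
      simp [hki, hkj]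
  · rw [star_dotProduct_single_one_mulVec]
    simp only [Pi.add_apply, Pi.single_eq_same, Pi.single_eq_of_ne hij, Pi.single_eq_of_ne' hij,
      add_zero, zero_add, RCLike.star_def, Complex.conj_mul']
    rw [← Complex.ofReal_pow, hc]
    norm_num

lemma isGreatest_norm_numRange_single_one {i j : ι} (hij : i ≠ j) :
    IsGreatest (norm '' numRange (single i j (1 : ℂ))) (1 / 2) := by
  refine ⟨⟨1 / 2, half_mem_numRange_single_one hij, by norm_num⟩, ?_⟩
  rintro _ ⟨z, hz, rfl⟩
  exact norm_le_half_of_mem_numRange_single_one hij hz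

end NumericalRange

lemma isGreatest_norm_mul_of_isGreatest_norm {S T : Set ℂ} {a b : ℝ}
    (hS : IsGreatest (norm '' S) a) (hT : IsGreatest (norm '' T) b) :
    IsGreatest {r : ℝ | ∃ x ∈ S, ∃ y ∈ T, r = ‖x * y‖} (a * b) := by
  obtain ⟨⟨x, hx, rfl⟩, hSub⟩ := hS
  obtain ⟨⟨y, hy, rfl⟩, hTub⟩ := hT
  refine ⟨⟨x, hx, y, hy, (norm_mul x y).symm⟩, ?_⟩
  rintro _ ⟨x', hx', y', hy', rfl⟩
  rw [norm_mul]
  exact mul_le_mul (hSub ⟨x', hx', rfl⟩) (hTub ⟨y', hy', rfl⟩) (norm_nonneg _) (norm_nonneg _)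

lemma bivPolyEval_X_zero_mul_X_one {m n : Type*} [Fintype m] [DecidableEq m] [Fintype n]
    [DecidableEq n] (A : Matrix m m ℂ) (B : Matrix n n ℂ) :
    bivPolyEval (MvPolynomial.X 0 * MvPolynomial.X 1) A B = B ⊗ₖ A := by
  rw [bivPolyEval, MvPolynomial.X, MvPolynomial.X, MvPolynomial.monomial_mul, one_mul,
    MvPolynomial.support_monomial, if_neg one_ne_zero]
  simp

lemma jordan_two_eq_single : (![![0, 1], ![0, 0]] : Matrix (Fin 2) (Fin 2) ℂ) = single 0 1 1 := by
  ext a b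
  fin_cases a <;> fin_cases b <;> rfl

/-- For the 2×2 nilpotent Jordan blocks `A = B`, the spectral norm of `B ⊗ A` is `1`
while the supremum of `|xy|` over `W(A) × W(B)` is `1/4`; consequently any constant `K`
with `‖p{A,B}‖₂ ≤ K · sup_{W(A)×W(B)} |p|` for all bivariate polynomials `p`
satisfies `K ≥ 4`. -/
theorem kronecker_jordan_lower_bound
    (A B : Matrix (Fin 2) (Fin 2) ℂ) (hA : A = ![![0, 1], ![0, 0]])
    (hB : B = ![![0, 1], ![0, 0]]) :
    specNorm (B ⊗ₖ A) = 1 ∧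
    sSup {r : ℝ | ∃ x ∈ numRange A, ∃ y ∈ numRange B, r = ‖x * y‖} = 1 / 4 ∧
    ∀ K : ℝ,
      (∀ p : MvPolynomial (Fin 2) ℂ,
        specNorm (bivPolyEval p A B) ≤
          K * sSup {r : ℝ | ∃ x ∈ numRange A, ∃ y ∈ numRange B,
            r = ‖MvPolynomial.eval ![x, y] p‖}) →
      4 ≤ K := by
  rw [jordan_two_eq_single] at hA hB
  have h01 : (0 : Fin 2) ≠ 1 := by decide
  have hnorm : specNorm (B ⊗ₖ A) = 1 := by
    rw [hA, hB, single_kronecker_single, mul_one, specNorm_single_one]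
  have hsup : sSup {r : ℝ | ∃ x ∈ numRange A, ∃ y ∈ numRange B, r = ‖x * y‖} = 1 / 4 := by
    have h := isGreatest_norm_mul_of_isGreatest_norm
      (hA ▸ isGreatest_norm_numRange_single_one h01)
      (hB ▸ isGreatest_norm_numRange_single_one h01)
    rw [show (1 / 2 : ℝ) * (1 / 2) = 1 / 4 by norm_num] at h
    exact h.csSup_eq
  refine ⟨hnorm, hsup, fun K hK => ?_⟩
  have h := hK (MvPolynomial.X 0 * MvPolynomial.X 1)
  simp only [bivPolyEval_X_zero_mul_X_one, hnorm, map_mul, MvPolynomial.eval_X,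
    Matrix.cons_val_zero, Matrix.cons_val_one, hsup] at h
  linarith
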